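/- The strong H-infinity norm of the asymptotic transfer function T_a, as a function of the delay vector τ⃗ ∈ (ℝ₀⁺)^m, is constant; that is, for any two positive delay vectors τ⃗ and τ⃗', the strong H-infinity norms of T_a(jω, τ⃗) and T_a(jω, τ⃗') coincide, both being equal to max_{θ⃗∈[0,2π]^m} σ₁(𝕋_a(θ⃗)). -/

import Mathlib

open scoped Matrix.Norms.L2Operator ENNReal NNReal
open Matrix Filter Topology Set

noncomputable section

variable {n m p q v a b : ℕ}

/-- entrywise coercion of a real matrix to a complex matrix -/
def cmx (A : Matrix (Fin a) (Fin b) ℝ) : Matrix (Fin a) (Fin b) ℂ :=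
  A.map fun x => (x : ℂ)

/-- the characteristic matrix  λE - A₀ - ∑ᵢ Aᵢ e^{-λτᵢ}  of the DDAE -/
def charM (E A0 : Matrix (Fin n) (Fin n) ℝ) (A : Fin m → Matrix (Fin n) (Fin n) ℝ)
    (τ : Fin m → ℝ) (lam : ℂ) : Matrix (Fin n) (Fin n) ℂ :=
  lam • cmx E - cmx A0 - ∑ i, Complex.exp (-(lam * (τ i : ℂ))) • cmx (A i)

/-- the transfer function  T(jω) = C (jωE - A₀ - ∑ Aᵢe^{-jωτᵢ})⁻¹ B -/
def Tf (E A0 : Matrix (Fin n) (Fin n) ℝ) (A : Fin m → Matrix (Fin n) (Fin n) ℝ)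
    (B : Matrix (Fin n) (Fin p) ℝ) (C : Matrix (Fin q) (Fin n) ℝ)
    (τ : Fin m → ℝ) (ω : ℝ) : Matrix (Fin q) (Fin p) ℂ :=
  cmx C * (charM E A0 A τ (Complex.I * (ω : ℂ)))⁻¹ * cmx B

/-- the delay-difference matrix  UᵀA₀V + ∑ UᵀAᵢV e^{-jωτᵢ} -/
def M0tau (U V : Matrix (Fin n) (Fin v) ℝ) (A0 : Matrix (Fin n) (Fin n) ℝ)
    (A : Fin m → Matrix (Fin n) (Fin n) ℝ) (τ : Fin m → ℝ) (ω : ℝ) :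
    Matrix (Fin v) (Fin v) ℂ :=
  (cmx U)ᵀ * cmx A0 * cmx V +
    ∑ i, Complex.exp (-(Complex.I * (ω : ℂ) * (τ i : ℂ))) • ((cmx U)ᵀ * cmx (A i) * cmx V)

/-- the asymptotic transfer function  T_a(jω) -/
def Taf (U V : Matrix (Fin n) (Fin v) ℝ) (A0 : Matrix (Fin n) (Fin n) ℝ)
    (A : Fin m → Matrix (Fin n) (Fin n) ℝ) (B : Matrix (Fin n) (Fin p) ℝ)
    (C : Matrix (Fin q) (Fin n) ℝ) (τ : Fin m → ℝ) (ω : ℝ) : Matrix (Fin q) (Fin p) ℂ :=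
  -(cmx C * cmx V * (M0tau U V A0 A τ ω)⁻¹ * ((cmx U)ᵀ * cmx B))

/-- 𝔸₂₂(θ) = -UᵀA₀V - ∑ UᵀAᵢV e^{-jθᵢ} -/
def AA22 (U V : Matrix (Fin n) (Fin v) ℝ) (A0 : Matrix (Fin n) (Fin n) ℝ)
    (A : Fin m → Matrix (Fin n) (Fin n) ℝ) (θ : Fin m → ℝ) : Matrix (Fin v) (Fin v) ℂ :=
  -((cmx U)ᵀ * cmx A0 * cmx V) -
    ∑ i, Complex.exp (-(Complex.I * (θ i : ℂ))) • ((cmx U)ᵀ * cmx (A i) * cmx V)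

/-- 𝕋_a(θ) = CV 𝔸₂₂(θ)⁻¹ UᵀB -/
def TTa (U V : Matrix (Fin n) (Fin v) ℝ) (A0 : Matrix (Fin n) (Fin n) ℝ)
    (A : Fin m → Matrix (Fin n) (Fin n) ℝ) (B : Matrix (Fin n) (Fin p) ℝ)
    (C : Matrix (Fin q) (Fin n) ℝ) (θ : Fin m → ℝ) : Matrix (Fin q) (Fin p) ℂ :=
  cmx C * cmx V * (AA22 U V A0 A θ)⁻¹ * ((cmx U)ᵀ * cmx B)

/-- the H∞ norm, ⨆_ω of the largest singular value (= L2 operator norm),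
in the extended nonnegative reals -/
def Hinf (G : ℝ → Matrix (Fin a) (Fin b) ℂ) : ℝ≥0∞ :=
  ⨆ ω : ℝ, (‖G ω‖₊ : ℝ≥0∞)

/-- the strong H∞ norm at delay vector τ: the limit (= infimum, by monotonicity)
as ε → 0+ of the supremum of the H∞ norm over B(τ, ε) ∩ (ℝ⁺)^m -/
def strongHinf (G : (Fin m → ℝ) → ℝ → Matrix (Fin a) (Fin b) ℂ) (τ : Fin m → ℝ) : ℝ≥0∞ :=
  ⨅ (ε : ℝ) (_ : 0 < ε),
    ⨆ (τ' : Fin m → ℝ) (_ : dist τ' τ < ε ∧ ∀ i, 0 ≤ τ' i), Hinf (G τ')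

/-- ξ is a singular value of M iff ξ ≥ 0 and ξ² is an eigenvalue of MᴴM -/
def IsSingularValue (ξ : ℝ) (M : Matrix (Fin a) (Fin b) ℂ) : Prop :=
  0 ≤ ξ ∧ ∃ x : Fin b → ℂ, x ≠ 0 ∧ (Mᴴ * M) *ᵥ x = ((ξ ^ 2 : ℝ) : ℂ) • x

/-- strong exponential stability of the zero solution of the DDAE:
the characteristic matrix is invertible in the closed right half plane, robustly
with respect to small delay perturbations, and the associated delay difference
equation is strongly stable (the matrix 𝔸₂₂(θ) is invertible on the whole torus) -/
def StrongStable (E A0 : Matrix (Fin n) (Fin n) ℝ) (A : Fin m → Matrix (Fin n) (Fin n) ℝ)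
    (U V : Matrix (Fin n) (Fin v) ℝ) (τ : Fin m → ℝ) : Prop :=
  (∃ ε > (0 : ℝ), ∀ τ' : Fin m → ℝ, dist τ' τ < ε → (∀ i, 0 ≤ τ' i) →
      ∀ lam : ℂ, 0 ≤ lam.re → IsUnit (charM E A0 A τ' lam)) ∧
  ∀ θ : Fin m → ℝ, IsUnit (AA22 U V A0 A θ)

lemma neg_inv_of_isUnit {k : ℕ} {N : Matrix (Fin k) (Fin k) ℂ} (hN : IsUnit N) :
    (-N)⁻¹ = -N⁻¹ := by
  have h := Matrix.nonsing_inv_mul N ((Matrix.isUnit_iff_isUnit_det N).mp hN)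
  apply Matrix.inv_eq_left_inv
  simp [Matrix.neg_mul, Matrix.mul_neg, h]

lemma Taf_eq_TTa (U V : Matrix (Fin n) (Fin v) ℝ) (A0 : Matrix (Fin n) (Fin n) ℝ)
    (A : Fin m → Matrix (Fin n) (Fin n) ℝ) (B : Matrix (Fin n) (Fin p) ℝ)
    (C : Matrix (Fin q) (Fin n) ℝ)
    (hstab : ∀ θ : Fin m → ℝ, IsUnit (AA22 U V A0 A θ)) (σ : Fin m → ℝ) (ω : ℝ) :
    Taf U V A0 A B C σ ω = TTa U V A0 A B C (fun i => ω * σ i) := by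
  have he : ∀ i : Fin m, Complex.exp (-(Complex.I * (ω : ℂ) * ((σ i : ℝ) : ℂ))) =
      Complex.exp (-(Complex.I * ((ω * σ i : ℝ) : ℂ))) := by
    intro i; push_cast; ring_nf
  have hM : M0tau U V A0 A σ ω = -(AA22 U V A0 A (fun i => ω * σ i)) := by
    unfold M0tau AA22
    simp_rw [he]
    abel
  rw [Taf, hM, neg_inv_of_isUnit (hstab _), TTa]
  simp [Matrix.mul_neg, Matrix.neg_mul]

lemma TTa_shift (U V : Matrix (Fin n) (Fin v) ℝ) (A0 : Matrix (Fin n) (Fin n) ℝ)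
    (A : Fin m → Matrix (Fin n) (Fin n) ℝ) (B : Matrix (Fin n) (Fin p) ℝ)
    (C : Matrix (Fin q) (Fin n) ℝ) (θ : Fin m → ℝ) (k : Fin m → ℤ) :
    TTa U V A0 A B C (fun i => θ i + 2 * Real.pi * k i) = TTa U V A0 A B C θ := by
  have hA : AA22 U V A0 A (fun i => θ i + 2 * Real.pi * k i) = AA22 U V A0 A θ := by
    unfold AA22
    congr 1
    refine Finset.sum_congr rfl fun i _ => ?_
    congr 1
    push_cast
    rw [show -(Complex.I * ((θ i : ℂ) + 2 * Real.pi * (k i : ℤ))) =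
        -(Complex.I * (θ i : ℂ)) + (-(k i) : ℤ) * (2 * Real.pi * Complex.I) by push_cast; ring,
      Complex.exp_add, Complex.exp_int_mul_two_pi_mul_I, mul_one]
  rw [TTa, TTa, hA]

-- abstract version: if Taf σ ω = F (ω • σ) and F periodic, then strongHinf = sup F
lemma strongHinf_eq_iSup (F : (Fin m → ℝ) → Matrix (Fin a) (Fin b) ℂ)
    (G : (Fin m → ℝ) → ℝ → Matrix (Fin a) (Fin b) ℂ)
    (hG : ∀ σ ω, G σ ω = F (fun i => ω * σ i))
    (hper : ∀ (θ : Fin m → ℝ) (k : Fin m → ℤ), F (fun i => θ i + 2 * Real.pi * k i) = F θ)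
    (τ : Fin m → ℝ) (hτ : ∀ i, 0 < τ i) :
    strongHinf G τ = ⨆ θ : Fin m → ℝ, (‖F θ‖₊ : ℝ≥0∞) := by
  have hπ : (0:ℝ) < Real.pi := Real.pi_pos
  apply le_antisymm
  · refine le_trans (iInf_le _ 1) (le_trans (iInf_le _ one_pos) ?_)
    refine iSup_le fun σ => iSup_le fun _ => iSup_le fun ω => ?_
    rw [hG]
    exact le_iSup (fun θ : Fin m → ℝ => (‖F θ‖₊ : ℝ≥0∞)) _
  · refine iSup_le fun θ => le_iInf fun ε => le_iInf fun hε => ?_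
    -- choose a large frequency ω
    set ω : ℝ := Real.pi / ε + 1 + ∑ i, Real.pi / τ i with hωdef
    have hsum_nonneg : (0:ℝ) ≤ ∑ i, Real.pi / τ i :=
      Finset.sum_nonneg fun i _ => le_of_lt (div_pos hπ (hτ i))
    have hω : 0 < ω := by positivity
    have hωε : Real.pi / ω < ε := by
      rw [div_lt_iff₀ hω]
      have h1 : Real.pi / ε < ω := by
        rw [hωdef]; nlinarith [div_pos hπ hε]
      rw [div_lt_iff₀ hε] at h1
      nlinarith
    have hωτ : ∀ i, Real.pi / ω < τ i := by
      intro i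
      have h1 : Real.pi / τ i ≤ ∑ j, Real.pi / τ j :=
        Finset.single_le_sum (f := fun j => Real.pi / τ j)
          (fun j _ => le_of_lt (div_pos hπ (hτ j))) (Finset.mem_univ i)
      have h2 : Real.pi / τ i < ω := by
        rw [hωdef]; nlinarith [div_pos hπ hε]
      rw [div_lt_iff₀ (hτ i)] at h2
      rw [div_lt_iff₀ hω]; nlinarith
    -- choose integers and the perturbed delays
    set k : Fin m → ℤ := fun i => round ((ω * τ i - θ i) / (2 * Real.pi)) with hk
    set σ : Fin m → ℝ := fun i => (θ i + 2 * Real.pi * k i) / ω with hσ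
    have hωσ : ∀ i, ω * σ i = θ i + 2 * Real.pi * k i := by
      intro i; rw [hσ]; field_simp
    have hdiff : ∀ i, |σ i - τ i| ≤ Real.pi / ω := by
      intro i
      have h2π : (0:ℝ) < 2 * Real.pi := by positivity
      have hx : |(ω * τ i - θ i) / (2 * Real.pi) - k i| ≤ 1 / 2 := abs_sub_round _
      have heq : σ i - τ i =
          -((2 * Real.pi) * ((ω * τ i - θ i) / (2 * Real.pi) - k i)) / ω := by
        rw [hσ]; field_simp; ring
      rw [heq, abs_div, abs_neg, abs_mul, abs_of_pos h2π, abs_of_pos hω,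
        div_le_div_iff₀ hω hω]
      nlinarith [mul_le_mul_of_nonneg_left hx h2π.le,
        mul_le_mul_of_nonneg_right (mul_le_mul_of_nonneg_left hx h2π.le) hω.le]
    have hdist : dist σ τ < ε := by
      rw [dist_pi_lt_iff hε]
      intro i
      rw [Real.dist_eq]
      exact lt_of_le_of_lt (hdiff i) hωε
    have hpos : ∀ i, 0 ≤ σ i := by
      intro i
      have h1 := abs_le.mp (hdiff i)
      have h2 := hωτ i
      linarith [h1.1]
    calc (‖F θ‖₊ : ℝ≥0∞) = (‖G σ ω‖₊ : ℝ≥0∞) := by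
          rw [hG]
          have : (fun i => ω * σ i) = fun i => θ i + 2 * Real.pi * k i := by
            funext i; rw [hωσ]
          rw [this, hper]
      _ ≤ Hinf (G σ) := le_iSup (fun ω' => (‖G σ ω'‖₊ : ℝ≥0∞)) ω
      _ ≤ _ := le_iSup₂_of_le σ ⟨hdist, hpos⟩ le_rfl

lemma iSup_torus (F : (Fin m → ℝ) → Matrix (Fin a) (Fin b) ℂ)
    (hper : ∀ (θ : Fin m → ℝ) (k : Fin m → ℤ), F (fun i => θ i + 2 * Real.pi * k i) = F θ) :
    (⨆ θ : Fin m → ℝ, (‖F θ‖₊ : ℝ≥0∞)) =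
      ⨆ (θ : Fin m → ℝ) (_ : ∀ i, θ i ∈ Set.Icc (0 : ℝ) (2 * Real.pi)),
        (‖F θ‖₊ : ℝ≥0∞) := by
  have hπ : (0:ℝ) < Real.pi := Real.pi_pos
  have h2π : (0:ℝ) < 2 * Real.pi := by positivity
  apply le_antisymm
  · refine iSup_le fun θ => ?_
    set θ' : Fin m → ℝ := fun i => 2 * Real.pi * Int.fract (θ i / (2 * Real.pi)) with hθ'
    have hmem : ∀ i, θ' i ∈ Set.Icc (0 : ℝ) (2 * Real.pi) := by
      intro i
      constructor
      · exact mul_nonneg h2π.le (Int.fract_nonneg _)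
      · show 2 * Real.pi * Int.fract (θ i / (2 * Real.pi)) ≤ 2 * Real.pi
        nlinarith [Int.fract_lt_one (θ i / (2 * Real.pi))]
    have hFeq : F θ = F θ' := by
      have : θ = fun i => θ' i + 2 * Real.pi * (⌊θ i / (2 * Real.pi)⌋ : ℤ) := by
        funext i
        rw [hθ']
        simp only [Int.fract]
        field_simp
        ring
      conv_lhs => rw [this]
      exact hper θ' _
    rw [hFeq]
    exact le_iSup₂_of_le θ' hmem le_rfl
  · exact iSup₂_le fun θ _ => le_iSup (fun θ : Fin m → ℝ => (‖F θ‖₊ : ℝ≥0∞)) θ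

theorem strongHinf_Ta_constant_in_delays {n m p q v : ℕ}
    (A0 : Matrix (Fin n) (Fin n) ℝ) (A : Fin m → Matrix (Fin n) (Fin n) ℝ)
    (B : Matrix (Fin n) (Fin p) ℝ) (C : Matrix (Fin q) (Fin n) ℝ)
    (U V : Matrix (Fin n) (Fin v) ℝ)
    (hA0 : IsUnit (Uᵀ * A0 * V))
    (hstab : ∀ θ : Fin m → ℝ, IsUnit (AA22 U V A0 A θ)) :
    ∀ τ τ' : Fin m → ℝ, (∀ i, 0 < τ i) → (∀ i, 0 < τ' i) →
      strongHinf (fun σ ω => Taf U V A0 A B C σ ω) τ =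
        strongHinf (fun σ ω => Taf U V A0 A B C σ ω) τ' ∧
      strongHinf (fun σ ω => Taf U V A0 A B C σ ω) τ =
        ⨆ (θ : Fin m → ℝ) (_ : ∀ i, θ i ∈ Set.Icc (0 : ℝ) (2 * Real.pi)),
          (‖TTa U V A0 A B C θ‖₊ : ℝ≥0∞) := by
  have hper : ∀ (θ : Fin m → ℝ) (k : Fin m → ℤ),
      TTa U V A0 A B C (fun i => θ i + 2 * Real.pi * k i) = TTa U V A0 A B C θ :=
    TTa_shift U V A0 A B C
  have hkey : ∀ τ : Fin m → ℝ, (∀ i, 0 < τ i) →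
      strongHinf (fun σ ω => Taf U V A0 A B C σ ω) τ =
        ⨆ θ : Fin m → ℝ, (‖TTa U V A0 A B C θ‖₊ : ℝ≥0∞) := fun τ hτ =>
    strongHinf_eq_iSup (TTa U V A0 A B C) _ (Taf_eq_TTa U V A0 A B C hstab) hper τ hτ
  intro τ τ' hτ hτ'
  refine ⟨by rw [hkey τ hτ, hkey τ' hτ'], ?_⟩
  rw [hkey τ hτ, iSup_torus _ hper]
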